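/- Sufficient dual certificate condition for exact recovery by thin-grid C-BP: Let m₀ = Σ_{ν=1}^N α_{0,ν} δ_{x_{0,ν}} with α_{0,ν} > 0, x_{0,ν} pairwise distinct and x_{0,ν} ∈ G_{n₀} for some n₀. Assume there exists μ = Φ^*q for some q ∈ L²(T) such that μ(t) < 1 for all t ∉ {x_{0,1},…,x_{0,N}} and, for every ν, μ(x_{0,ν}) = 1, μ''(x_{0,ν}) ≠ 0, μ^{(3)}(x_{0,ν}) = 0, and μ^{(4)}(x_{0,ν}) > 0. Then, for all n sufficiently large, m₀ (identified with the pair (a₀, 0), where a₀ places the masses α_{0,ν} at the grid points x_{0,ν}) is a solution of the thin-grid C-BP basis pursuit Q_0^n(Φ m₀). If moreover Γ_{x₀} has full rank, this solution is unique. -/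

import Mathlib

open MeasureTheory Filter
open scoped BigOperators
noncomputable section

/-- `p` belongs to `L²(T)` (torus represented by `1`-periodic functions on `ℝ`). -/
def MemL2T (p : ℝ → ℝ) : Prop :=
  Measurable p ∧ Function.Periodic p 1 ∧
    IntegrableOn (fun x => (p x)^2) (Set.Ioc (0:ℝ) 1)

/-- The adjoint operator `Φ^* q : y ↦ ∫_T φ(x,y) q(x) dx`. -/
def PhiStar (φ : ℝ → ℝ → ℝ) (q : ℝ → ℝ) : ℝ → ℝ :=
  fun t => ∫ x in Set.Ioc (0:ℝ) 1, φ x t * q x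

/-- Equality of points of the torus `T = ℝ/ℤ`. -/
def tEq (a b : ℝ) : Prop := ∃ k : ℤ, a = b + (k : ℝ)

/-- The cone constraint of the thin-grid C-BP. -/
def cbpCone (P : ℕ → ℕ) (n : ℕ) (a b : Fin (P n) → ℝ) : Prop :=
  ∀ i, 0 ≤ a i ∧ |b i| ≤ ((1 / (P n : ℝ)) / 2) * a i

namespace CBPaux
section QInt
variable (q : ℝ → ℝ)

lemma q_integrable (hqm : Measurable q)
    (hq2 : IntegrableOn (fun x => (q x)^2) (Set.Ioc (0:ℝ) 1)) :
    IntegrableOn q (Set.Ioc (0:ℝ) 1) := by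
  have hconst : IntegrableOn (fun _ : ℝ => (1:ℝ)) (Set.Ioc (0:ℝ) 1) := by
    exact integrableOn_const (by rw [Real.volume_Ioc]; exact ENNReal.ofReal_ne_top) (by simp)
  refine Integrable.mono' (hconst.add hq2) hqm.aestronglyMeasurable ?_
  filter_upwards with x
  rw [Real.norm_eq_abs]
  show |q x| ≤ 1 + (q x)^2
  nlinarith [sq_nonneg (|q x| - 1), sq_abs (q x), abs_nonneg (q x)]

lemma integrable_contMul (hqm : Measurable q) (hqi : IntegrableOn q (Set.Ioc (0:ℝ) 1))
    (g : ℝ → ℝ) (hg : Continuous g) :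
    IntegrableOn (fun x => g x * q x) (Set.Ioc (0:ℝ) 1) := by
  obtain ⟨C, hC⟩ := isCompact_Icc.exists_bound_of_continuousOn (f := g)
    (hg.continuousOn (s := Set.Icc (0:ℝ) 1))
  refine Integrable.mono' ((hqi.abs).const_mul C) (hg.aestronglyMeasurable.mul
    hqm.aestronglyMeasurable) ?_
  filter_upwards [ae_restrict_mem measurableSet_Ioc] with x hx
  rw [Real.norm_eq_abs, abs_mul]
  exact mul_le_mul_of_nonneg_right
    (by simpa [Real.norm_eq_abs] using hC x ⟨le_of_lt hx.1, hx.2⟩) (abs_nonneg _)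
end QInt

variable (φ : ℝ → ℝ → ℝ)

def D : ℕ → ℝ → ℝ → ℝ
  | 0 => φ
  | (k+1) => fun x t => deriv (D k x) t

variable {φ} in
lemma D_contDiff (hφ : ContDiff ℝ (⊤ : ℕ∞) (fun p : ℝ × ℝ => φ p.1 p.2)) (k : ℕ) :
    ContDiff ℝ (⊤ : ℕ∞) (fun p : ℝ × ℝ => D φ k p.1 p.2) := by
  induction k with
  | zero => exact hφ
  | succ k ih =>
    have h1 : ContDiff ℝ (⊤ : ℕ∞) (fun p : ℝ × ℝ => fderiv ℝ (D φ k p.1) p.2) := by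
      apply ContDiff.fderiv (f := fun (p : ℝ × ℝ) t => D φ k p.1 t) (g := fun p : ℝ × ℝ => p.2)
        (m := (⊤ : ℕ∞)) (n := (⊤ : ℕ∞))
      · exact ih.comp (ContDiff.prodMk (contDiff_fst.comp contDiff_fst) contDiff_snd)
      · exact contDiff_snd
      · exact (by simp)
    have h2 : ContDiff ℝ (⊤ : ℕ∞) (fun p : ℝ × ℝ => fderiv ℝ (D φ k p.1) p.2 (1:ℝ)) :=
      h1.clm_apply contDiff_const
    have heq : (fun p : ℝ × ℝ => D φ (k+1) p.1 p.2)
        = fun p : ℝ × ℝ => fderiv ℝ (D φ k p.1) p.2 (1:ℝ) := by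
      funext p
      show deriv (D φ k p.1) p.2 = _
      exact (fderiv_apply_one_eq_deriv).symm
    rw [heq]
    exact h2

variable {φ}

lemma D_hasDerivAt (hφ : ContDiff ℝ (⊤ : ℕ∞) (fun p : ℝ × ℝ => φ p.1 p.2)) (k : ℕ) (x t : ℝ) :
    HasDerivAt (fun s => D φ k x s) (D φ (k+1) x t) t := by
  have hdiff : DifferentiableAt ℝ (fun s => D φ k x s) t :=
    (((D_contDiff hφ k).differentiable (by simp)).comp
      ((differentiable_const x).prodMk differentiable_id)).differentiableAt
  exact hdiff.hasDerivAt

lemma D_cont₁ (hφ : ContDiff ℝ (⊤ : ℕ∞) (fun p : ℝ × ℝ => φ p.1 p.2)) (k : ℕ) (t : ℝ) :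
    Continuous (fun x => D φ k x t) :=
  (D_contDiff hφ k).continuous.comp (continuous_id.prodMk continuous_const)

lemma D_per₂ (hper : ∀ x : ℝ, Function.Periodic (fun t => φ x t) 1) (k : ℕ) (x : ℝ) :
    Function.Periodic (fun t => D φ k x t) 1 := by
  induction k with
  | zero => exact hper x
  | succ k ih =>
    intro t
    show deriv (D φ k x) (t + 1) = deriv (D φ k x) t
    have h : D φ k x = fun s => D φ k x (s + 1) := by funext s; exact (ih s).symm
    conv_rhs => rw [h]
    rw [deriv_comp_add_const]

variable (φ) (q : ℝ → ℝ)

/-- iterated derivatives of the certificate μ = Φ^* q -/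
def M (k : ℕ) : ℝ → ℝ := fun t => ∫ x in Set.Ioc (0:ℝ) 1, D φ k x t * q x

variable {φ q}

lemma M_hasDerivAt (hφ : ContDiff ℝ (⊤ : ℕ∞) (fun p : ℝ × ℝ => φ p.1 p.2))
    (hqm : Measurable q) (hqi : IntegrableOn q (Set.Ioc (0:ℝ) 1))
    (k : ℕ) (t₀ : ℝ) :
    HasDerivAt (M φ q k) (M φ q (k+1) t₀) t₀ := by
  obtain ⟨C, hC⟩ := (isCompact_Icc.prod isCompact_Icc).exists_bound_of_continuousOn
    ((D_contDiff hφ (k+1)).continuous.continuousOn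
      (s := Set.Icc (0:ℝ) 1 ×ˢ Set.Icc (t₀-1) (t₀+1)))
  have key := hasDerivAt_integral_of_dominated_loc_of_deriv_le
    (μ := volume.restrict (Set.Ioc (0:ℝ) 1))
    (F := fun t x => D φ k x t * q x) (F' := fun t x => D φ (k+1) x t * q x)
    (x₀ := t₀) (bound := fun x => C * |q x|) (s := Metric.ball t₀ 1) (Metric.ball_mem_nhds t₀ one_pos)
    (Eventually.of_forall fun t =>
      ((D_cont₁ hφ k t).aestronglyMeasurable.mul hqm.aestronglyMeasurable))
    (by
      have := integrable_contMul q hqm hqi (fun x => D φ k x t₀) (D_cont₁ hφ k t₀)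
      exact this)
    ((D_cont₁ hφ (k+1) t₀).aestronglyMeasurable.mul hqm.aestronglyMeasurable)
    (by
      filter_upwards [ae_restrict_mem measurableSet_Ioc] with x hx
      intro t ht
      rw [Metric.mem_ball, Real.dist_eq] at ht
      have habs := abs_lt.1 ht
      have hmem : ((x, t) : ℝ × ℝ) ∈ Set.Icc (0:ℝ) 1 ×ˢ Set.Icc (t₀-1) (t₀+1) :=
        ⟨⟨hx.1.le, hx.2⟩, by constructor <;> linarith⟩
      rw [Real.norm_eq_abs, abs_mul]
      exact mul_le_mul_of_nonneg_right
        (by simpa [Real.norm_eq_abs] using hC (x, t) hmem) (abs_nonneg _))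
    ((hqi.abs).const_mul C)
    (Eventually.of_forall fun x t _ => (D_hasDerivAt hφ k x t).mul_const (q x))
  exact key.2

lemma M_cont (hφ : ContDiff ℝ (⊤ : ℕ∞) (fun p : ℝ × ℝ => φ p.1 p.2))
    (hqm : Measurable q) (hqi : IntegrableOn q (Set.Ioc (0:ℝ) 1)) (k : ℕ) :
    Continuous (M φ q k) :=
  continuous_iff_continuousAt.2 fun t => (M_hasDerivAt hφ hqm hqi k t).continuousAt

lemma M_deriv (hφ : ContDiff ℝ (⊤ : ℕ∞) (fun p : ℝ × ℝ => φ p.1 p.2))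
    (hqm : Measurable q) (hqi : IntegrableOn q (Set.Ioc (0:ℝ) 1)) (k : ℕ) :
    deriv (M φ q k) = M φ q (k+1) :=
  funext fun t => (M_hasDerivAt hφ hqm hqi k t).deriv

lemma M_iteratedDeriv (hφ : ContDiff ℝ (⊤ : ℕ∞) (fun p : ℝ × ℝ => φ p.1 p.2))
    (hqm : Measurable q) (hqi : IntegrableOn q (Set.Ioc (0:ℝ) 1)) (k : ℕ) :
    iteratedDeriv k (M φ q 0) = M φ q k := by
  induction k with
  | zero => simp [iteratedDeriv_zero]
  | succ k ih => rw [iteratedDeriv_succ, ih, M_deriv hφ hqm hqi]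

lemma M_per (hper : ∀ x : ℝ, Function.Periodic (fun t => φ x t) 1) (k : ℕ) :
    Function.Periodic (M φ q k) 1 := by
  intro t
  unfold M
  congr 1
  funext x
  rw [show D φ k x (t+1) = D φ k x t from D_per₂ hper k x t]


lemma pos_near {f : ℝ → ℝ} {c : ℝ} (hf : ContinuousAt f c) (h : 0 < f c) :
    ∃ ε > 0, ∀ x ∈ Set.Icc (c - ε) (c + ε), 0 < f x := by
  have hmem : f ⁻¹' Set.Ioi 0 ∈ nhds c := hf (isOpen_Ioi.mem_nhds h)
  obtain ⟨δ, hδ, hball⟩ := Metric.mem_nhds_iff.1 hmem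
  refine ⟨δ/2, by linarith, fun x hx => ?_⟩
  have : x ∈ Metric.ball c δ := by
    rw [Metric.mem_ball, Real.dist_eq, abs_lt]
    obtain ⟨h1, h2⟩ := hx
    constructor <;> linarith
  exact hball this

lemma smOn {f f' : ℝ → ℝ} (hf : ∀ x, HasDerivAt f (f' x) x) {a b : ℝ}
    (hpos : ∀ x ∈ Set.Ioo a b, 0 < f' x) : StrictMonoOn f (Set.Icc a b) := by
  apply strictMonoOn_of_deriv_pos (convex_Icc a b)
    (fun x _ => (hf x).continuousAt.continuousWithinAt)
  intro x hx
  rw [interior_Icc] at hx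
  rw [(hf x).deriv]
  exact hpos x hx

/-- If f(c)=0 and f' > 0 on a punctured neighborhood, f is negative left and positive right. -/
lemma signA {f f' : ℝ → ℝ} (hf : ∀ x, HasDerivAt f (f' x) x) {c ε : ℝ} (hε : 0 < ε)
    (hc : f c = 0) (hpos : ∀ x ∈ Set.Icc (c - ε) (c + ε), x ≠ c → 0 < f' x) :
    (∀ x ∈ Set.Icc (c - ε) c, x ≠ c → f x < 0) ∧
      (∀ x ∈ Set.Icc c (c + ε), x ≠ c → 0 < f x) := by
  have hL : StrictMonoOn f (Set.Icc (c - ε) c) := by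
    apply smOn hf
    intro x hx
    exact hpos x ⟨hx.1.le, by linarith [hx.2]⟩ (ne_of_lt hx.2)
  have hR : StrictMonoOn f (Set.Icc c (c + ε)) := by
    apply smOn hf
    intro x hx
    exact hpos x ⟨by linarith [hx.1], hx.2.le⟩ (ne_of_gt hx.1)
  constructor
  · intro x hx hne
    have := hL hx ⟨by linarith [hε], le_refl c⟩ (lt_of_le_of_ne hx.2 hne)
    rwa [hc] at this
  · intro x hx hne
    have := hR ⟨le_refl c, by linarith [hε]⟩ hx (lt_of_le_of_ne hx.1 (Ne.symm hne))
    rwa [hc] at this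

/-- If f(c)=0 and f' < 0 left, > 0 right, then f > 0 on a punctured neighborhood. -/
lemma signB {f f' : ℝ → ℝ} (hf : ∀ x, HasDerivAt f (f' x) x) {c ε : ℝ} (hε : 0 < ε)
    (hc : f c = 0)
    (hneg : ∀ x ∈ Set.Icc (c - ε) c, x ≠ c → f' x < 0)
    (hpos : ∀ x ∈ Set.Icc c (c + ε), x ≠ c → 0 < f' x) :
    ∀ x ∈ Set.Icc (c - ε) (c + ε), x ≠ c → 0 < f x := by
  have hL : StrictMonoOn (fun y => -f y) (Set.Icc (c - ε) c) := by
    apply smOn (f' := fun y => -f' y) (fun x => (hf x).neg)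
    intro x hx
    have := hneg x ⟨hx.1.le, hx.2.le⟩ (ne_of_lt hx.2)
    linarith
  have hR : StrictMonoOn f (Set.Icc c (c + ε)) := by
    apply smOn hf
    intro x hx
    exact hpos x ⟨hx.1.le, hx.2.le⟩ (ne_of_gt hx.1)
  intro x hx hne
  rcases lt_or_gt_of_ne hne with h | h
  · have := hL ⟨hx.1, h.le⟩ ⟨by linarith [hε], le_refl c⟩ h
    simp only [hc] at this
    linarith
  · have := hR ⟨le_refl c, by linarith [hε]⟩ ⟨h.le, hx.2⟩ h
    rwa [hc] at this

lemma exists_pos_forall_le {N : ℕ} (f : Fin N → ℝ) (hf : ∀ ν, 0 < f ν) :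
    ∃ ε > 0, ∀ ν, ε ≤ f ν := by
  rcases isEmpty_or_nonempty (Fin N) with h | h
  · exact ⟨1, one_pos, fun ν => (IsEmpty.false ν).elim⟩
  · obtain ⟨ν₀, -, hmin⟩ := Finset.exists_min_image Finset.univ f
      ⟨Classical.arbitrary _, Finset.mem_univ _⟩
    exact ⟨f ν₀, hf ν₀, fun ν => hmin ν (Finset.mem_univ ν)⟩

lemma sum_eq_spikes {N m : ℕ} (I : Fin N → Fin m) (hI : Function.Injective I)
    (f : Fin m → ℝ) (h0 : ∀ j, (∀ ν, j ≠ I ν) → f j = 0) :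
    ∑ j, f j = ∑ ν, f (I ν) := by
  have h1 : ∑ j ∈ Finset.univ.image I, f j = ∑ ν, f (I ν) :=
    Finset.sum_image (fun a _ b _ h => hI h)
  have h2 : ∑ j ∈ Finset.univ.image I, f j = ∑ j, f j :=
    Finset.sum_subset (Finset.subset_univ _)
      (fun j _ hj => h0 j fun ν hji =>
        hj (Finset.mem_image.2 ⟨ν, Finset.mem_univ _, hji.symm⟩))
  rw [← h2, h1]



section
variable {μ : ℕ → ℝ → ℝ} (hd : ∀ k t, HasDerivAt (μ k) (μ (k+1) t) t)

include hd

lemma mcont (k : ℕ) : Continuous (μ k) :=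
  continuous_iff_continuousAt.2 fun t => (hd k t).continuousAt

lemma pos_near' {f : ℝ → ℝ} {c : ℝ} (hf : ContinuousAt f c) (h : 0 < f c) :
    ∃ ε > 0, ∀ x ∈ Set.Icc (c - ε) (c + ε), 0 < f x := pos_near hf h

/-- second derivative at an interior global max is nonpositive -/
lemma second_le {c : ℝ} (hle : ∀ t, μ 0 t ≤ 1) (h0 : μ 0 c = 1) : μ 2 c ≤ 0 := by
  by_contra hcon
  push_neg at hcon
  obtain ⟨ε, hε, hpos⟩ := pos_near (hd 2 c).continuousAt hcon
  -- μ 1 c = 0 since c is a global max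
  have h1 : μ 1 c = 0 := by
    have hmax : IsLocalMax (μ 0) c := by
      apply Filter.Eventually.of_forall
      intro t; rw [h0]; exact hle t
    have := hmax.deriv_eq_zero
    rwa [(hd 0 c).deriv] at this
  -- μ 1 > 0 on (c, c+ε]
  have hsA := (signA (fun t => hd 1 t) hε h1 (fun x hx _ => hpos x hx)).2
  -- μ 0 strictly increasing on [c, c+ε]
  have hsm : StrictMonoOn (μ 0) (Set.Icc c (c + ε)) := by
    apply smOn (fun t => hd 0 t)
    intro x hx
    exact hsA x ⟨hx.1.le, hx.2.le⟩ (ne_of_gt hx.1)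
  have hlt : μ 0 c < μ 0 (c + ε) :=
    hsm ⟨le_refl c, by linarith⟩ ⟨by linarith, le_refl _⟩ (by linarith)
  have hle' := hle (c + ε)
  linarith

lemma spike_key {c : ℝ} (hle : ∀ t, μ 0 t ≤ 1) (h0 : μ 0 c = 1)
    (h2 : μ 2 c ≠ 0) (h3 : μ 3 c = 0) (h4 : 0 < μ 4 c) :
    ∃ ε > 0, ∀ s : ℝ, s ≠ 0 → |s| ≤ ε → μ 0 (c + s) + (|s|/2) * |μ 1 (c + s)| < 1 := by
  have h1 : μ 1 c = 0 := by
    have hmax : IsLocalMax (μ 0) c :=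
      Filter.Eventually.of_forall fun t => by rw [h0]; exact hle t
    have := hmax.deriv_eq_zero
    rwa [(hd 0 c).deriv] at this
  have h2' : μ 2 c < 0 := lt_of_le_of_ne (second_le hd hle h0) h2
  -- shifted derivative
  have hshift : ∀ (k : ℕ) (s : ℝ), HasDerivAt (fun u => μ k (c + u)) (μ (k+1) (c + s)) s := by
    intro k s
    have h := (hd k (c + s)).comp s ((hasDerivAt_id s).const_add c)
    rw [mul_one] at h
    exact h
  -- the two auxiliary functions
  set g0 : ℝ → ℝ := fun s => 1 - μ 0 (c + s) - s/2 * μ 1 (c + s) with hg0def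
  set g1 : ℝ → ℝ := fun s => -(3/2) * μ 1 (c + s) - s/2 * μ 2 (c + s) with hg1def
  set g2 : ℝ → ℝ := fun s => -2 * μ 2 (c + s) - s/2 * μ 3 (c + s) with hg2def
  set f0 : ℝ → ℝ := fun s => 1 - μ 0 (c + s) + s/2 * μ 1 (c + s) with hf0def
  set f1 : ℝ → ℝ := fun s => -(1/2) * μ 1 (c + s) + s/2 * μ 2 (c + s) with hf1def
  have hg0d : ∀ s, HasDerivAt g0 (g1 s) s := by
    intro s
    have h := ((hasDerivAt_const s (1:ℝ)).sub (hshift 0 s)).sub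
      (((hasDerivAt_id s).div_const 2).mul (hshift 1 s))
    refine h.congr_deriv ?_
    simp [hg1def]; ring
  have hg1d : ∀ s, HasDerivAt g1 (g2 s) s := by
    intro s
    have h := ((hshift 1 s).const_mul (-(3/2) : ℝ)).sub
      (((hasDerivAt_id s).div_const 2).mul (hshift 2 s))
    refine h.congr_deriv ?_
    simp [hg2def]; ring
  have hf0d : ∀ s, HasDerivAt f0 (f1 s) s := by
    intro s
    have h := ((hasDerivAt_const s (1:ℝ)).sub (hshift 0 s)).add
      (((hasDerivAt_id s).div_const 2).mul (hshift 1 s))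
    refine h.congr_deriv ?_
    simp [hf1def]; ring
  have hf1d : ∀ s, HasDerivAt f1 (s/2 * μ 3 (c + s)) s := by
    intro s
    have h := ((hshift 1 s).const_mul (-(1/2) : ℝ)).add
      (((hasDerivAt_id s).div_const 2).mul (hshift 2 s))
    refine h.congr_deriv ?_
    simp only [id_eq]
    ring
  -- continuity of g2
  have hc2 := mcont hd 2
  have hc3 := mcont hd 3
  have hg2cont : Continuous g2 := by
    apply Continuous.sub
    · exact continuous_const.mul (hc2.comp (continuous_const.add continuous_id))
    · exact (continuous_id.div_const 2).mul (hc3.comp (continuous_const.add continuous_id))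
  have hg20 : 0 < g2 0 := by
    simp only [hg2def, add_zero]
    nlinarith
  obtain ⟨ε₁, hε₁, hg2pos⟩ := pos_near hg2cont.continuousAt hg20
  have hg10 : g1 0 = 0 := by simp [hg1def, h1]
  obtain ⟨hg1L, hg1R⟩ := signA hg1d hε₁ hg10 (fun x hx _ => hg2pos x hx)
  have hg00 : g0 0 = 0 := by simp [hg0def, h0]
  have hg0pos := signB hg0d hε₁ hg00 hg1L hg1R
  -- F side
  obtain ⟨ε₂, hε₂, h4pos⟩ := pos_near (mcont hd 4).continuousAt h4
  obtain ⟨h3L, h3R⟩ := signA (fun t => hd 3 t) hε₂ h3 (fun x hx _ => h4pos x hx)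
  have hf2pos : ∀ x ∈ Set.Icc ((0:ℝ) - ε₂) (0 + ε₂), x ≠ 0 → 0 < x/2 * μ 3 (c + x) := by
    intro x hx hne
    rcases lt_or_gt_of_ne hne with hneg | hposx
    · have hm : c + x ∈ Set.Icc (c - ε₂) c := ⟨by linarith [hx.1], by linarith⟩
      have := h3L (c + x) hm (by intro h; exact hne (by linarith))
      have hx2 : x/2 < 0 := by linarith
      exact mul_pos_of_neg_of_neg hx2 this
    · have hm : c + x ∈ Set.Icc c (c + ε₂) := ⟨by linarith, by linarith [hx.2]⟩
      have := h3R (c + x) hm (by intro h; exact hne (by linarith))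
      exact mul_pos (by linarith) this
  have hf10 : f1 0 = 0 := by simp [hf1def, h1]
  obtain ⟨hf1L, hf1R⟩ := signA hf1d hε₂ hf10 hf2pos
  have hf00 : f0 0 = 0 := by simp [hf0def, h0]
  have hf0pos := signB hf0d hε₂ hf00 hf1L hf1R
  -- conclusion
  refine ⟨min ε₁ ε₂, lt_min hε₁ hε₂, fun s hne hsle => ?_⟩
  have hs1 : |s| ≤ ε₁ := le_trans hsle (min_le_left _ _)
  have hs2 : |s| ≤ ε₂ := le_trans hsle (min_le_right _ _)
  have habs1 := abs_le.1 hs1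
  have habs2 := abs_le.1 hs2
  have hg := hg0pos s ⟨by linarith [habs1.1], by linarith [habs1.2]⟩ hne
  have hf := hf0pos s ⟨by linarith [habs2.1], by linarith [habs2.2]⟩ hne
  simp only [hg0def] at hg
  simp only [hf0def] at hf
  have hub : s * μ 1 (c + s) < 2 * (1 - μ 0 (c + s)) := by linarith
  have hlb : -(2 * (1 - μ 0 (c + s))) < s * μ 1 (c + s) := by linarith
  have habs := abs_lt.2 ⟨hlb, hub⟩
  rw [abs_mul] at habs
  linarith
end


lemma D_one (φ : ℝ → ℝ → ℝ) (x y : ℝ) : D φ 1 x y = deriv (fun t => φ x t) y := rfl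

lemma sum_integral {φ : ℝ → ℝ → ℝ} {q : ℝ → ℝ}
    (hφ : ContDiff ℝ (⊤ : ℕ∞) (fun p : ℝ × ℝ => φ p.1 p.2))
    (hqm : Measurable q) (hqi : IntegrableOn q (Set.Ioc (0:ℝ) 1))
    {m : ℕ} (T : Fin m → ℝ) (a b : Fin m → ℝ) :
    ∫ x in Set.Ioc (0:ℝ) 1, (∑ j, (a j * φ x (T j) + b j * D φ 1 x (T j))) * q x
      = ∑ j, (a j * M φ q 0 (T j) + b j * M φ q 1 (T j)) := by
  have hint0 : ∀ j : Fin m, IntegrableOn (fun x => D φ 0 x (T j) * q x) (Set.Ioc (0:ℝ) 1) :=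
    fun j => integrable_contMul q hqm hqi _ (D_cont₁ hφ 0 (T j))
  have hint1 : ∀ j : Fin m, IntegrableOn (fun x => D φ 1 x (T j) * q x) (Set.Ioc (0:ℝ) 1) :=
    fun j => integrable_contMul q hqm hqi _ (D_cont₁ hφ 1 (T j))
  have hint : ∀ j : Fin m, IntegrableOn
      (fun x => a j * (D φ 0 x (T j) * q x) + b j * (D φ 1 x (T j) * q x)) (Set.Ioc (0:ℝ) 1) :=
    fun j => ((hint0 j).const_mul (a j)).add ((hint1 j).const_mul (b j))
  calc ∫ x in Set.Ioc (0:ℝ) 1, (∑ j, (a j * φ x (T j) + b j * D φ 1 x (T j))) * q x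
      = ∫ x in Set.Ioc (0:ℝ) 1,
          ∑ j, (a j * (D φ 0 x (T j) * q x) + b j * (D φ 1 x (T j) * q x)) := by
        congr 1
        funext x
        rw [Finset.sum_mul]
        refine Finset.sum_congr rfl fun j _ => ?_
        have hD0 : D φ 0 = φ := rfl
        rw [hD0]
        show (a j * φ x (T j) + b j * D φ 1 x (T j)) * q x = _
        ring
    _ = ∑ j, ∫ x in Set.Ioc (0:ℝ) 1,
          (a j * (D φ 0 x (T j) * q x) + b j * (D φ 1 x (T j) * q x)) :=
        integral_finset_sum _ (fun j _ => hint j)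
    _ = ∑ j, (a j * M φ q 0 (T j) + b j * M φ q 1 (T j)) := by
        refine Finset.sum_congr rfl fun j _ => ?_
        rw [integral_add ((hint0 j).const_mul (a j)) ((hint1 j).const_mul (b j)),
          integral_const_mul, integral_const_mul]
        rfl

end CBPaux


set_option maxHeartbeats 1000000 in
/-- **Sufficient dual certificate condition for exact recovery by thin-grid C-BP.**
`m₀ = Σ_ν α₀_ν δ_{x₀_ν}` with `α₀_ν > 0` and spikes on the grid `G_{n₀}`.  If there
is `μ = Φ^*q`, `q ∈ L²(T)`, with `μ < 1` off `{x₀_ν}` (mod 1) and, at each spike,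
`μ(x₀_ν) = 1`, `μ''(x₀_ν) ≠ 0`, `μ⁽³⁾(x₀_ν) = 0`, `μ⁽⁴⁾(x₀_ν) > 0`, then for all `n`
large enough `m₀` (identified with the pair `(a₀, 0)`) solves the thin-grid C-BP
basis pursuit `Q_0^n(Φ m₀)`; if moreover `Γ_{x₀}` has full rank, this solution is
unique. -/
theorem thin_grid_cbp_certificate_exact_recovery
    (φ : ℝ → ℝ → ℝ)
    (hφ_smooth : ContDiff ℝ (⊤ : ℕ∞) (fun p : ℝ × ℝ => φ p.1 p.2))
    (hφ_per₁ : ∀ t : ℝ, Function.Periodic (fun x => φ x t) 1)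
    (hφ_per₂ : ∀ x : ℝ, Function.Periodic (fun t => φ x t) 1)
    (P : ℕ → ℕ) (hP : ∀ n, 0 < P n) (hPnested : ∀ n, P n ∣ P (n + 1))
    (hPfine : Tendsto (fun n => (P n : ℝ)) atTop atTop)
    {N : ℕ} (α₀ x₀ : Fin N → ℝ) (hα₀ : ∀ ν, 0 < α₀ ν)
    (hx₀_mem : ∀ ν, x₀ ν ∈ Set.Ico (0:ℝ) 1) (hx₀_inj : Function.Injective x₀)
    (n₀ : ℕ) (hgrid : ∀ ν, ∃ i : Fin (P n₀), x₀ ν = (i : ℝ) * (1 / (P n₀ : ℝ)))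
    -- the certificate μ = Φ^* q
    (q : ℝ → ℝ) (hq : MemL2T q)
    (hμ_lt : ∀ t : ℝ, (∀ ν, ∀ k : ℤ, t ≠ x₀ ν + (k : ℝ)) → PhiStar φ q t < 1)
    (hμ_sat : ∀ ν, PhiStar φ q (x₀ ν) = 1)
    (hμ_d2 : ∀ ν, iteratedDeriv 2 (PhiStar φ q) (x₀ ν) ≠ 0)
    (hμ_d3 : ∀ ν, iteratedDeriv 3 (PhiStar φ q) (x₀ ν) = 0)
    (hμ_d4 : ∀ ν, 0 < iteratedDeriv 4 (PhiStar φ q) (x₀ ν)) :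
    ∃ n₁ : ℕ, ∀ n, n₁ ≤ n →
      ∀ a₀vec : Fin (P n) → ℝ,
        -- a₀vec is the grid representation of m₀
        (∀ ν, ∀ i : Fin (P n), tEq ((i : ℝ) * (1 / (P n : ℝ))) (x₀ ν) → a₀vec i = α₀ ν) →
        (∀ i : Fin (P n), (∀ ν, ¬ tEq ((i : ℝ) * (1 / (P n : ℝ))) (x₀ ν)) → a₀vec i = 0) →
        -- (a₀vec, 0) is a solution of Q_0^n(Φ m₀) …
        ((cbpCone P n a₀vec 0 ∧
          (∀ xx : ℝ, (∑ i : Fin (P n), (a₀vec i * φ xx ((i : ℝ) * (1 / (P n : ℝ)))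
              + (0:ℝ) * deriv (fun t => φ xx t) ((i : ℝ) * (1 / (P n : ℝ))))) =
            ∑ ν, α₀ ν * φ xx (x₀ ν)) ∧
          (∀ a b : Fin (P n) → ℝ, cbpCone P n a b →
            (∀ xx : ℝ, (∑ i : Fin (P n), (a i * φ xx ((i : ℝ) * (1 / (P n : ℝ)))
                + b i * deriv (fun t => φ xx t) ((i : ℝ) * (1 / (P n : ℝ))))) =
              ∑ ν, α₀ ν * φ xx (x₀ ν)) →
            (∑ i, |a₀vec i|) ≤ ∑ i, |a i|)) ∧
        -- … and, if Γ_{x₀} has full rank, the unique one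
        ((∀ c c' : Fin N → ℝ,
            (∀ xx : ℝ, (∑ ν, (c ν * φ xx (x₀ ν) +
              c' ν * deriv (fun t => φ xx t) (x₀ ν))) = 0) → c = 0 ∧ c' = 0) →
          ∀ a b : Fin (P n) → ℝ, cbpCone P n a b →
            (∀ xx : ℝ, (∑ i : Fin (P n), (a i * φ xx ((i : ℝ) * (1 / (P n : ℝ)))
                + b i * deriv (fun t => φ xx t) ((i : ℝ) * (1 / (P n : ℝ))))) =
              ∑ ν, α₀ ν * φ xx (x₀ ν)) →
            (∑ i, |a i|) ≤ (∑ i, |a₀vec i|) →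
            a = a₀vec ∧ b = 0)) := by
  classical
  obtain ⟨hqm, hqper, hq2⟩ := hq
  have hqi : IntegrableOn q (Set.Ioc (0:ℝ) 1) := CBPaux.q_integrable q hqm hq2
  set μ : ℕ → ℝ → ℝ := CBPaux.M φ q with hμdef
  have hd : ∀ k t, HasDerivAt (μ k) (μ (k+1) t) t :=
    fun k t => CBPaux.M_hasDerivAt hφ_smooth hqm hqi k t
  have hPhi : PhiStar φ q = μ 0 := rfl
  have hμper : ∀ k, Function.Periodic (μ k) 1 := fun k => CBPaux.M_per hφ_per₂ k
  have hμit : ∀ k, iteratedDeriv k (PhiStar φ q) = μ k := by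
    rw [hPhi]; exact CBPaux.M_iteratedDeriv hφ_smooth hqm hqi
  have hμshift : ∀ (k : ℕ) (t : ℝ) (kz : ℤ), μ k (t + (kz:ℝ)) = μ k t := by
    intro k t kz
    have := ((hμper k).int_mul kz) t
    simpa using this
  -- μ 0 ≤ 1 everywhere
  have hle : ∀ t, μ 0 t ≤ 1 := by
    intro t
    by_cases hc : ∃ (ν : Fin N) (k : ℤ), t = x₀ ν + (k:ℝ)
    · obtain ⟨ν, k, rfl⟩ := hc
      rw [hμshift 0 (x₀ ν) k, ← hPhi, hμ_sat ν]
    · push_neg at hc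
      exact le_of_lt (by rw [← hPhi]; exact hμ_lt t hc)
  have hμ0spike : ∀ ν, μ 0 (x₀ ν) = 1 := by intro ν; rw [← hPhi]; exact hμ_sat ν
  have hμ1spike : ∀ ν, μ 1 (x₀ ν) = 0 := by
    intro ν
    have hmax : IsLocalMax (μ 0) (x₀ ν) :=
      Filter.Eventually.of_forall fun t => by rw [hμ0spike ν]; exact hle t
    have := hmax.deriv_eq_zero
    rwa [(hd 0 (x₀ ν)).deriv] at this
  -- per-spike local estimate
  have hspike : ∀ ν, ∃ ε > 0, ∀ s : ℝ, s ≠ 0 → |s| ≤ ε →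
      μ 0 (x₀ ν + s) + (|s|/2) * |μ 1 (x₀ ν + s)| < 1 := by
    intro ν
    refine CBPaux.spike_key hd hle (hμ0spike ν) ?_ ?_ ?_
    · rw [← hμit 2]; exact hμ_d2 ν
    · rw [← hμit 3]; exact hμ_d3 ν
    · rw [← hμit 4]; exact hμ_d4 ν
  choose εf hεfpos hεf using hspike
  obtain ⟨ε, hε, hεle⟩ := CBPaux.exists_pos_forall_le εf hεfpos
  -- the compact set far from the spikes
  set S : Set ℝ := {t | t ∈ Set.Icc (0:ℝ) 1 ∧
      ∀ ν, ε ≤ |t - x₀ ν| ∧ ε ≤ |t - x₀ ν - 1| ∧ ε ≤ |t - x₀ ν + 1|} with hSdef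
  have hSclosed : IsClosed S := by
    have : S = Set.Icc (0:ℝ) 1 ∩ ⋂ ν, ({t : ℝ | ε ≤ |t - x₀ ν|} ∩
        ({t : ℝ | ε ≤ |t - x₀ ν - 1|} ∩ {t : ℝ | ε ≤ |t - x₀ ν + 1|})) := by
      ext t
      simp only [hSdef, Set.mem_setOf_eq, Set.mem_inter_iff, Set.mem_iInter]
    rw [this]
    refine isClosed_Icc.inter (isClosed_iInter fun ν => ?_)
    refine (isClosed_le continuous_const ((continuous_id.sub continuous_const).abs)).inter
      ((isClosed_le continuous_const
        (((continuous_id.sub continuous_const).sub continuous_const).abs)).inter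
       (isClosed_le continuous_const
        (((continuous_id.sub continuous_const).add continuous_const).abs)))
  have hScompact : IsCompact S :=
    isCompact_Icc.of_isClosed_subset hSclosed (fun t ht => ht.1)
  have hfar : ∃ δ > 0, ∀ t ∈ S, μ 0 t ≤ 1 - δ := by
    by_cases hS : S.Nonempty
    · obtain ⟨ts, htS, hmax⟩ := hScompact.exists_isMaxOn hS
        ((CBPaux.mcont hd 0).continuousOn)
      have hts : μ 0 ts < 1 := by
        rw [← hPhi]
        apply hμ_lt
        intro ν k heq
        have h01 := htS.1
        have hx := hx₀_mem ν
        have hk01 : k = 0 ∨ k = 1 := by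
          have h1 : ((k:ℤ):ℝ) ≤ 1 := by
            have : (k:ℝ) = ts - x₀ ν := by rw [heq]; ring
            rw [this]
            have := h01.2
            linarith [hx.1]
          have h2 : (-1:ℝ) < ((k:ℤ):ℝ) := by
            have : (k:ℝ) = ts - x₀ ν := by rw [heq]; ring
            rw [this]
            linarith [h01.1, hx.2]
          have hk1 : k ≤ 1 := by exact_mod_cast h1
          have hk2 : (-1:ℤ) < k := by exact_mod_cast h2
          omega
        rcases hk01 with rfl | rfl
        · have := (htS.2 ν).1
          rw [heq] at this
          simp at this
          linarith
        · have := (htS.2 ν).2.1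
          have h0 : ts - x₀ ν - 1 = 0 := by rw [heq]; push_cast; ring
          rw [h0] at this
          simp at this
          linarith
      refine ⟨1 - μ 0 ts, by linarith, fun t ht => ?_⟩
      have := hmax ht
      simp only [Set.mem_setOf_eq] at this
      linarith [this]
    · exact ⟨1, one_pos, fun t ht => absurd ⟨t, ht⟩ hS⟩
  obtain ⟨δ, hδ, hδS⟩ := hfar
  -- bound on μ 1 over [0,1]
  obtain ⟨Mb, hMb⟩ := isCompact_Icc.exists_bound_of_continuousOn
    ((CBPaux.mcont hd 1).continuousOn (s := Set.Icc (0:ℝ) 1))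
  set Mb' : ℝ := max Mb 1 with hMb'def
  have hMb'pos : (0:ℝ) < Mb' := lt_of_lt_of_le one_pos (le_max_right _ _)
  -- choose the threshold
  obtain ⟨n₂, hn₂⟩ := Filter.eventually_atTop.1
    ((tendsto_atTop.1 hPfine) (max (1/ε) (2*Mb'/δ)))
  refine ⟨max n₀ n₂, ?_⟩
  intro n hn a₀vec ha₀1 ha₀2
  have hn₀ : n₀ ≤ n := le_trans (le_max_left _ _) hn
  have hn₂' : n₂ ≤ n := le_trans (le_max_right _ _) hn
  have hPpos : (0:ℝ) < (P n : ℝ) := by exact_mod_cast hP n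
  set h : ℝ := 1 / (P n : ℝ) with hhdef
  have hhpos : 0 < h := by rw [hhdef]; positivity
  have hPC : max (1/ε) (2*Mb'/δ) ≤ (P n : ℝ) := hn₂ n hn₂'
  have hhε : h ≤ ε := by
    have h1 : 1/ε ≤ (P n : ℝ) := le_trans (le_max_left _ _) hPC
    have h2 : 1 ≤ (P n : ℝ) * ε := by
      have := (div_le_iff₀ hε).1 h1
      linarith
    rw [hhdef, div_le_iff₀ hPpos]
    linarith
  have hhδ2 : h * Mb' ≤ δ/2 := by
    have h1 : 2*Mb'/δ ≤ (P n : ℝ) := le_trans (le_max_right _ _) hPC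
    have h2 : 2*Mb' ≤ (P n : ℝ) * δ := by
      have := (div_le_iff₀ hδ).1 h1
      linarith
    rw [hhdef, div_mul_eq_mul_div, one_mul, div_le_div_iff₀ hPpos two_pos]
    linarith
  -- divisibility
  have hdvd : P n₀ ∣ P n := by
    have haux : ∀ m, n₀ ≤ m → P n₀ ∣ P m := by
      intro m hm
      induction m, hm using Nat.le_induction with
      | base => exact dvd_rfl
      | succ k hk ih => exact ih.trans (hPnested k)
    exact haux n hn₀
  -- the spike grid indices
  have hIexists : ∀ ν, ∃ j : Fin (P n), (j : ℝ) * h = x₀ ν := by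
    intro ν
    obtain ⟨i, hi⟩ := hgrid ν
    obtain ⟨m, hm⟩ := hdvd
    have hm0 : 0 < m := by
      rcases Nat.eq_zero_or_pos m with h0 | h0
      · exfalso; have := hP n; rw [hm, h0, Nat.mul_zero] at this; exact absurd this (lt_irrefl 0)
      · exact h0
    have hjlt : i.val * m < P n := by
      rw [hm]
      exact Nat.mul_lt_mul_of_lt_of_le i.isLt (le_refl m) hm0
    refine ⟨⟨i.val * m, hjlt⟩, ?_⟩
    show ((i.val * m : ℕ) : ℝ) * h = x₀ ν
    have hcast : (P n : ℝ) = (P n₀ : ℝ) * (m : ℝ) := by rw [hm]; push_cast; ring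
    have hPn₀ : (0:ℝ) < (P n₀ : ℝ) := by exact_mod_cast hP n₀
    have hmR : (0:ℝ) < (m : ℝ) := by exact_mod_cast hm0
    rw [hi, hhdef, hcast]
    push_cast
    field_simp
  choose I hI using hIexists
  have hIinj : Function.Injective I := by
    intro ν ν' hh'
    apply hx₀_inj
    rw [← hI ν, ← hI ν', hh']
  -- grid points lie in [0,1)
  have hgridmem : ∀ j : Fin (P n), 0 ≤ (j : ℝ) * h ∧ (j : ℝ) * h < 1 := by
    intro j
    constructor
    · positivity
    · have hjlt : ((j:ℕ) : ℝ) < (P n : ℝ) := by exact_mod_cast j.isLt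
      rw [hhdef, mul_one_div]
      exact (div_lt_one hPpos).2 hjlt
  -- characterization of tEq on the grid
  have htEq : ∀ (j : Fin (P n)) (ν : Fin N), tEq ((j : ℝ) * h) (x₀ ν) ↔ j = I ν := by
    intro j ν
    constructor
    · rintro ⟨k, hk⟩
      have hj := hgridmem j
      have hx := hx₀_mem ν
      have hk0 : k = 0 := by
        have h1 : ((k:ℤ):ℝ) < 1 := by
          have hkr : (k:ℝ) = (j : ℝ) * h - x₀ ν := by rw [hk]; ring
          rw [hkr]; linarith [hj.2, hx.1]
        have h2 : (-1:ℝ) < ((k:ℤ):ℝ) := by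
          have hkr : (k:ℝ) = (j : ℝ) * h - x₀ ν := by rw [hk]; ring
          rw [hkr]; linarith [hj.1, hx.2]
        have hk1 : k < 1 := by exact_mod_cast h1
        have hk2 : (-1:ℤ) < k := by exact_mod_cast h2
        omega
      rw [hk0] at hk
      simp only [Int.cast_zero, add_zero] at hk
      have hval : (j : ℝ) = ((I ν : Fin (P n)) : ℝ) := by
        have := (hI ν)
        have heq2 : (j : ℝ) * h = ((I ν : Fin (P n)) : ℝ) * h := by rw [hk, this]
        exact mul_right_cancel₀ (ne_of_gt hhpos) heq2
      have : (j : ℕ) = ((I ν : Fin (P n)) : ℕ) := by exact_mod_cast hval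
      exact Fin.ext this
    · rintro rfl
      exact ⟨0, by rw [hI ν]; simp⟩
  -- values of a₀vec
  have ha₀I : ∀ ν, a₀vec (I ν) = α₀ ν := fun ν => ha₀1 ν (I ν) ((htEq (I ν) ν).2 rfl)
  have ha₀off : ∀ j, (∀ ν, j ≠ I ν) → a₀vec j = 0 :=
    fun j hj => ha₀2 j (fun ν ht => hj ν ((htEq j ν).1 ht))
  have ha₀nonneg : ∀ j, 0 ≤ a₀vec j := by
    intro j
    by_cases hsp : ∃ ν, j = I ν
    · obtain ⟨ν, rfl⟩ := hsp
      rw [ha₀I ν]; exact le_of_lt (hα₀ ν)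
    · push_neg at hsp
      rw [ha₀off j hsp]
  have hsum₀ : ∑ j, |a₀vec j| = ∑ ν, α₀ ν := by
    rw [CBPaux.sum_eq_spikes I hIinj (fun j => |a₀vec j|)
      (fun j hj => by show |a₀vec j| = 0; rw [ha₀off j hj]; simp)]
    refine Finset.sum_congr rfl fun ν _ => ?_
    show |a₀vec (I ν)| = α₀ ν
    rw [ha₀I ν]
    exact abs_of_pos (hα₀ ν)
  -- key estimates on grid points
  have keyA : ∀ ν, μ 0 (((I ν : Fin (P n)) : ℝ) * h) = 1 ∧
      μ 1 (((I ν : Fin (P n)) : ℝ) * h) = 0 := by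
    intro ν
    rw [hI ν]
    exact ⟨hμ0spike ν, hμ1spike ν⟩
  have keyB : ∀ j : Fin (P n), (∀ ν, j ≠ I ν) →
      μ 0 ((j : ℝ) * h) + (h/2) * |μ 1 ((j : ℝ) * h)| < 1 := by
    intro j hj
    by_cases hc : ∃ ν, |((j:ℝ)*h) - x₀ ν| < ε ∨ |((j:ℝ)*h) - x₀ ν - 1| < ε ∨
        |((j:ℝ)*h) - x₀ ν + 1| < ε
    · obtain ⟨ν, hcase⟩ := hc
      have inner : ∀ kz : ℤ, |((j:ℝ)*h) - x₀ ν - (kz:ℝ)| < ε →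
          μ 0 ((j : ℝ) * h) + (h/2) * |μ 1 ((j : ℝ) * h)| < 1 := by
        intro kz hkz
        set s : ℝ := ((j:ℝ)*h) - x₀ ν - (kz:ℝ) with hsdef
        have hsne : s ≠ 0 := by
          intro h0
          have heq : (j:ℝ)*h = x₀ ν + (kz:ℝ) := by
            have : ((j:ℝ)*h) - x₀ ν - (kz:ℝ) = 0 := h0
            linarith
          exact hj ν ((htEq j ν).1 ⟨kz, heq⟩)
        have hPh : (P n : ℝ) * h = 1 := by
          rw [hhdef]; field_simp
        obtain ⟨z, hzv⟩ : ∃ z : ℤ, z = ((j:ℕ):ℤ) - ((I ν : Fin (P n)):ℤ) - kz * (P n : ℤ) :=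
          ⟨_, rfl⟩
        have hz : s = (z : ℝ) * h := by
          rw [hsdef, ← hI ν, hzv]
          push_cast
          linear_combination (kz:ℝ) * hPh
        have hsh : h ≤ |s| := by
          have hzne : z ≠ 0 := by
            intro h0
            rw [h0] at hz
            simp at hz
            exact hsne hz
          have hz1 : (1:ℝ) ≤ |(z:ℝ)| := by exact_mod_cast Int.one_le_abs hzne
          rw [hz, abs_mul, abs_of_pos hhpos]
          nlinarith [mul_le_mul_of_nonneg_right hz1 (le_of_lt hhpos)]
        have hsε : |s| ≤ εf ν := le_trans (le_of_lt hkz) (hεle ν)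
        have hkey := hεf ν s hsne hsε
        have hjt : ((j:ℝ)*h) = (x₀ ν + s) + (kz:ℝ) := by rw [hsdef]; ring
        have hper0 : μ 0 ((j:ℝ)*h) = μ 0 (x₀ ν + s) := by rw [hjt, hμshift]
        have hper1 : μ 1 ((j:ℝ)*h) = μ 1 (x₀ ν + s) := by rw [hjt, hμshift]
        rw [hper0, hper1]
        have hmono : (h/2) * |μ 1 (x₀ ν + s)| ≤ (|s|/2) * |μ 1 (x₀ ν + s)| := by
          apply mul_le_mul_of_nonneg_right _ (abs_nonneg _)
          linarith
        linarith
      rcases hcase with h1 | h2 | h3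
      · exact inner 0 (by push_cast; simpa using h1)
      · exact inner 1 (by push_cast; simpa using h2)
      · exact inner (-1) (by push_cast; simpa [sub_neg_eq_add] using h3)
    · push_neg at hc
      have htS : ((j:ℝ)*h) ∈ S := by
        refine ⟨⟨(hgridmem j).1, le_of_lt (hgridmem j).2⟩, fun ν => ?_⟩
        exact hc ν
      have h1 := hδS _ htS
      have h2 : |μ 1 ((j:ℝ)*h)| ≤ Mb' := by
        refine le_trans ?_ (le_max_left Mb 1)
        have := hMb ((j:ℝ)*h) ⟨(hgridmem j).1, le_of_lt (hgridmem j).2⟩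
        simpa [Real.norm_eq_abs] using this
      have h3 : (h/2) * |μ 1 ((j:ℝ)*h)| ≤ (h/2) * Mb' :=
        mul_le_mul_of_nonneg_left h2 (by linarith)
      nlinarith
  have keyAll : ∀ j : Fin (P n), μ 0 ((j : ℝ) * h) + (h/2) * |μ 1 ((j : ℝ) * h)| ≤ 1 := by
    intro j
    by_cases hsp : ∃ ν, j = I ν
    · obtain ⟨ν, rfl⟩ := hsp
      rw [(keyA ν).1, (keyA ν).2]
      simp
    · push_neg at hsp
      exact le_of_lt (keyB j hsp)
  -- the duality identity
  have hdual : ∀ (a b : Fin (P n) → ℝ),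
      (∀ xx : ℝ, (∑ j : Fin (P n), (a j * φ xx ((j : ℝ) * h)
          + b j * deriv (fun t => φ xx t) ((j : ℝ) * h))) = ∑ ν, α₀ ν * φ xx (x₀ ν)) →
      ∑ j, (a j * μ 0 ((j : ℝ) * h) + b j * μ 1 ((j : ℝ) * h)) = ∑ ν, α₀ ν := by
    intro a b hfeas
    have hL := CBPaux.sum_integral hφ_smooth hqm hqi (fun j : Fin (P n) => ((j : ℝ) * h)) a b
    have hR := CBPaux.sum_integral hφ_smooth hqm hqi x₀ α₀ (fun _ => 0)
    have hLR : (∫ x in Set.Ioc (0:ℝ) 1,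
          (∑ j : Fin (P n), (a j * φ x ((j : ℝ) * h) + b j * CBPaux.D φ 1 x ((j : ℝ) * h))) * q x)
        = ∫ x in Set.Ioc (0:ℝ) 1, (∑ ν, (α₀ ν * φ x (x₀ ν) + 0 * CBPaux.D φ 1 x (x₀ ν))) * q x := by
      congr 1
      funext x
      congr 1
      rw [show (∑ ν, (α₀ ν * φ x (x₀ ν) + 0 * CBPaux.D φ 1 x (x₀ ν))) = ∑ ν, α₀ ν * φ x (x₀ ν)
        by refine Finset.sum_congr rfl fun ν _ => by ring]
      have := hfeas x
      simpa only [CBPaux.D_one] using this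
    have hμ0M : ∀ t, μ 0 t = CBPaux.M φ q 0 t := fun t => rfl
    have hμ1M : ∀ t, μ 1 t = CBPaux.M φ q 1 t := fun t => rfl
    calc ∑ j, (a j * μ 0 ((j : ℝ) * h) + b j * μ 1 ((j : ℝ) * h))
        = ∑ j, (a j * CBPaux.M φ q 0 ((j : ℝ) * h) + b j * CBPaux.M φ q 1 ((j : ℝ) * h)) := rfl
      _ = ∫ x in Set.Ioc (0:ℝ) 1,
            (∑ j : Fin (P n), (a j * φ x ((j : ℝ) * h)
              + b j * CBPaux.D φ 1 x ((j : ℝ) * h))) * q x := hL.symm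
      _ = ∫ x in Set.Ioc (0:ℝ) 1,
            (∑ ν, (α₀ ν * φ x (x₀ ν) + 0 * CBPaux.D φ 1 x (x₀ ν))) * q x := hLR
      _ = ∑ ν, (α₀ ν * CBPaux.M φ q 0 (x₀ ν) + 0 * CBPaux.M φ q 1 (x₀ ν)) := hR
      _ = ∑ ν, α₀ ν := by
          refine Finset.sum_congr rfl fun ν _ => ?_
          rw [← hμ0M, hμ0spike ν]
          ring
  -- per-term bound
  have hterm : ∀ (a b : Fin (P n) → ℝ), cbpCone P n a b → ∀ j : Fin (P n),
      a j * μ 0 ((j : ℝ) * h) + b j * μ 1 ((j : ℝ) * h) ≤ a j := by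
    intro a b hcone j
    obtain ⟨haj, hbj⟩ := hcone j
    rw [← hhdef] at hbj
    have h1 : b j * μ 1 ((j : ℝ) * h) ≤ (h/2 * a j) * |μ 1 ((j : ℝ) * h)| := by
      calc b j * μ 1 ((j : ℝ) * h) ≤ |b j * μ 1 ((j : ℝ) * h)| := le_abs_self _
        _ = |b j| * |μ 1 ((j : ℝ) * h)| := abs_mul _ _
        _ ≤ (h/2 * a j) * |μ 1 ((j : ℝ) * h)| :=
            mul_le_mul_of_nonneg_right hbj (abs_nonneg _)
    have h2 := keyAll j
    nlinarith [abs_nonneg (μ 1 ((j : ℝ) * h)), haj]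
  -- per-term bound, factored form
  have hterm2 : ∀ (a b : Fin (P n) → ℝ), cbpCone P n a b → ∀ j : Fin (P n),
      a j * μ 0 ((j : ℝ) * h) + b j * μ 1 ((j : ℝ) * h)
        ≤ a j * (μ 0 ((j : ℝ) * h) + (h/2) * |μ 1 ((j : ℝ) * h)|) := by
    intro a b hcone j
    obtain ⟨haj, hbj⟩ := hcone j
    rw [← hhdef] at hbj
    have h1 : b j * μ 1 ((j : ℝ) * h) ≤ (h/2 * a j) * |μ 1 ((j : ℝ) * h)| := by
      calc b j * μ 1 ((j : ℝ) * h) ≤ |b j * μ 1 ((j : ℝ) * h)| := le_abs_self _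
        _ = |b j| * |μ 1 ((j : ℝ) * h)| := abs_mul _ _
        _ ≤ (h/2 * a j) * |μ 1 ((j : ℝ) * h)| :=
            mul_le_mul_of_nonneg_right hbj (abs_nonneg _)
    nlinarith [abs_nonneg (μ 1 ((j : ℝ) * h))]
  refine ⟨⟨?_, ?_, ?_⟩, ?_⟩
  · -- cone constraint for (a₀vec, 0)
    intro i
    refine ⟨ha₀nonneg i, ?_⟩
    simp only [Pi.zero_apply, abs_zero]
    have := ha₀nonneg i
    positivity
  · -- feasibility of (a₀vec, 0)
    intro xx
    have hsimp : (∑ i : Fin (P n), (a₀vec i * φ xx ((i : ℝ) * h)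
        + (0:ℝ) * deriv (fun t => φ xx t) ((i : ℝ) * h)))
        = ∑ i : Fin (P n), a₀vec i * φ xx ((i : ℝ) * h) :=
      Finset.sum_congr rfl fun i _ => by ring
    rw [hsimp]
    rw [CBPaux.sum_eq_spikes I hIinj (fun j => a₀vec j * φ xx ((j : ℝ) * h))
      (fun j hj => by show a₀vec j * _ = 0; rw [ha₀off j hj]; ring)]
    refine Finset.sum_congr rfl fun ν _ => ?_
    show a₀vec (I ν) * φ xx (((I ν : Fin (P n)) : ℝ) * h) = α₀ ν * φ xx (x₀ ν)
    rw [ha₀I ν, hI ν]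
  · -- optimality
    intro a b hcone hfeas
    calc ∑ j, |a₀vec j| = ∑ ν, α₀ ν := hsum₀
      _ = ∑ j, (a j * μ 0 ((j : ℝ) * h) + b j * μ 1 ((j : ℝ) * h)) := (hdual a b hfeas).symm
      _ ≤ ∑ j, a j := Finset.sum_le_sum fun j _ => hterm a b hcone j
      _ ≤ ∑ j, |a j| := Finset.sum_le_sum fun j _ => le_abs_self _
  · -- uniqueness under full rank
    intro hfull a b hcone hfeas hlesum
    have hsa : ∑ j, a j ≤ ∑ ν, α₀ ν := by
      rw [← hsum₀]
      refine le_trans (le_of_eq ?_) hlesum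
      exact Finset.sum_congr rfl fun j _ => (abs_of_nonneg (hcone j).1).symm
    have hdl := hdual a b hfeas
    have hslack : ∀ j : Fin (P n),
        0 ≤ a j - (a j * μ 0 ((j : ℝ) * h) + b j * μ 1 ((j : ℝ) * h)) :=
      fun j => by linarith [hterm a b hcone j]
    have hs1 : ∑ j, (a j - (a j * μ 0 ((j : ℝ) * h) + b j * μ 1 ((j : ℝ) * h))) ≤ 0 := by
      rw [Finset.sum_sub_distrib, hdl]
      linarith
    have hs2 : 0 ≤ ∑ j, (a j - (a j * μ 0 ((j : ℝ) * h) + b j * μ 1 ((j : ℝ) * h))) :=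
      Finset.sum_nonneg fun j _ => hslack j
    have hzero := (Finset.sum_eq_zero_iff_of_nonneg (fun j _ => hslack j)).1
      (le_antisymm hs1 hs2)
    have hoff : ∀ j : Fin (P n), (∀ ν, j ≠ I ν) → a j = 0 ∧ b j = 0 := by
      intro j hj
      have haj0 : a j = 0 := by
        by_contra hne
        have hajpos : 0 < a j := lt_of_le_of_ne (hcone j).1 (Ne.symm hne)
        have hsl := hzero j (Finset.mem_univ j)
        have h2 := hterm2 a b hcone j
        have h3 : a j * (μ 0 ((j : ℝ) * h) + (h/2) * |μ 1 ((j : ℝ) * h)|) < a j * 1 :=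
          mul_lt_mul_of_pos_left (keyB j hj) hajpos
        rw [mul_one] at h3
        linarith
      have hbj0 : b j = 0 := by
        have := (hcone j).2
        rw [haj0, mul_zero] at this
        exact abs_eq_zero.1 (le_antisymm this (abs_nonneg _))
      exact ⟨haj0, hbj0⟩
    have hfeq : ∀ xx : ℝ, (∑ ν, ((fun ν => a (I ν) - α₀ ν) ν * φ xx (x₀ ν) +
        (fun ν => b (I ν)) ν * deriv (fun t => φ xx t) (x₀ ν))) = 0 := by
      intro xx
      have hsum := hfeas xx
      have hconv : (∑ j : Fin (P n), (a j * φ xx ((j : ℝ) * h)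
          + b j * deriv (fun t => φ xx t) ((j : ℝ) * h)))
          = ∑ ν, (a (I ν) * φ xx (x₀ ν) + b (I ν) * deriv (fun t => φ xx t) (x₀ ν)) := by
        rw [CBPaux.sum_eq_spikes I hIinj
          (fun j => a j * φ xx ((j : ℝ) * h) + b j * deriv (fun t => φ xx t) ((j : ℝ) * h))
          (fun j hj => by
            show a j * _ + b j * _ = 0
            rw [(hoff j hj).1, (hoff j hj).2]; ring)]
        refine Finset.sum_congr rfl fun ν _ => ?_
        show a (I ν) * φ xx (((I ν : Fin (P n)) : ℝ) * h)
          + b (I ν) * deriv (fun t => φ xx t) (((I ν : Fin (P n)) : ℝ) * h) = _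
        rw [hI ν]
      rw [hconv] at hsum
      have hsplit : ∑ ν, ((a (I ν) - α₀ ν) * φ xx (x₀ ν)
            + b (I ν) * deriv (fun t => φ xx t) (x₀ ν))
          = (∑ ν, (a (I ν) * φ xx (x₀ ν) + b (I ν) * deriv (fun t => φ xx t) (x₀ ν)))
            - ∑ ν, α₀ ν * φ xx (x₀ ν) := by
        rw [← Finset.sum_sub_distrib]
        exact Finset.sum_congr rfl fun ν _ => by ring
      show ∑ ν, ((a (I ν) - α₀ ν) * φ xx (x₀ ν)
        + b (I ν) * deriv (fun t => φ xx t) (x₀ ν)) = 0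
      rw [hsplit, hsum]
      ring
    obtain ⟨hc0, hc'0⟩ := hfull (fun ν => a (I ν) - α₀ ν) (fun ν => b (I ν)) hfeq
    have haI : ∀ ν, a (I ν) = α₀ ν := by
      intro ν
      have := congrFun hc0 ν
      simp only [Pi.zero_apply] at this
      linarith [this]
    have hbI : ∀ ν, b (I ν) = 0 := by
      intro ν
      have := congrFun hc'0 ν
      simpa using this
    constructor
    · funext j
      by_cases hsp : ∃ ν, j = I ν
      · obtain ⟨ν, rfl⟩ := hsp
        rw [haI ν, ha₀I ν]
      · push_neg at hsp
        rw [(hoff j hsp).1, ha₀off j hsp]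
    · funext j
      simp only [Pi.zero_apply]
      by_cases hsp : ∃ ν, j = I ν
      · obtain ⟨ν, rfl⟩ := hsp
        exact hbI ν
      · push_neg at hsp
        exact (hoff j hsp).2
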